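/- arXiv:1306.5879 — 2 statements merged into one kernel-verified Lean document; each statement's English description precedes it below -/
import Mathlib

section
/- Let p, q > 1 be real numbers with p^{31} = q^{40}. For c ∈ {0,1} define T_c(s,t) := (p s, p t − (p−1)c) and T'_c(s,t) := (s/q, t + ((q−1)/q) c s) on (ℝ\{0}) × ℝ. Then for every s ≠ 0, every t ∈ ℝ, and all finite 0–1 sequences (a_k)_{k=0}^{30} and (b_k)_{k=0}^{39}, the composition T'_{b_{39}} ∘ ⋯ ∘ T'_{b_0} ∘ T_{a_{30}} ∘ ⋯ ∘ T_{a_0} maps (s,t) to (s, p^{31} t + a_s), where a_s := −(p−1)·p^{30}·( Σ_{k=0}^{30} a_k / p^k − (p(q−1)/(q(p−1)))·s · Σ_{k=0}^{39} b_k / q^k ). In particular these compositions are return maps to the vertical line {s} × ℝ. -/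
/-! Both families act by affine maps whose linear parts are independent of the digits, so the
composites can be computed in closed form: the 31 maps `T_{a_k}` scale `s` by `p ^ 31` and add a
`p`-adic digit sum to `t`, the 40 maps `T'_{b_k}` scale `s` by `q ^ (-40)` and add a `q`-adic digit
sum weighted by `s`. The condition `p ^ 31 = q ^ 40` makes the total scaling of `s` trivial. -/

open Finset

section

variable {K : Type*} [Field K]

theorem sum_div_pow_succ (x : ℕ → K) (r : K) (n : ℕ) :
    ∑ k ∈ range n, x k / r ^ (k + 1) = (∑ k ∈ range n, x k / r ^ k) / r := by
  rw [sum_div]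
  exact sum_congr rfl fun k _ => by rw [pow_succ, div_div]

theorem foldl_range_expand_translate {p : K} (hp : p ≠ 0) (a : ℕ → K) (s t : K) (n : ℕ) :
    (List.range n).foldl (fun (st : K × K) (k : ℕ) => (p * st.1, p * st.2 - (p - 1) * a k)) (s, t)
      = (p ^ n * s, p ^ n * t - (p - 1) * p ^ n * ∑ k ∈ range n, a k / p ^ (k + 1)) := by
  induction n with
  | zero => simp
  | succ n ih =>
    rw [List.range_succ, List.foldl_append, ih]
    simp only [List.foldl_cons, List.foldl_nil, sum_range_succ, Prod.mk.injEq]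
    constructor
    · ring
    · field_simp
      ring

theorem foldl_range_contract_shear {q : K} (hq : q ≠ 0) (b : ℕ → K) (s t : K) (n : ℕ) :
    (List.range n).foldl
        (fun (st : K × K) (k : ℕ) => (st.1 / q, st.2 + (q - 1) / q * b k * st.1)) (s, t)
      = (s / q ^ n, t + (q - 1) * s * ∑ k ∈ range n, b k / q ^ (k + 1)) := by
  induction n with
  | zero => simp
  | succ n ih =>
    rw [List.range_succ, List.foldl_append, ih]
    simp only [List.foldl_cons, List.foldl_nil, sum_range_succ, Prod.mk.injEq]
    constructor
    · rw [pow_succ, div_div]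
    · field_simp
      ring

end

theorem return_map_formula_general (p q : ℝ) (hp : 1 < p) (hq : 1 < q) (hpq : p ^ 31 = q ^ 40)
    (a b : ℕ → ℝ) (s t : ℝ) :
    (List.range 40).foldl
        (fun (st : ℝ × ℝ) (k : ℕ) => (st.1 / q, st.2 + (q - 1) / q * b k * st.1))
        ((List.range 31).foldl
          (fun (st : ℝ × ℝ) (k : ℕ) => (p * st.1, p * st.2 - (p - 1) * a k)) (s, t))
      = (s, p ^ 31 * t +
          (-(p - 1) * p ^ 30 *
            (∑ k ∈ Finset.range 31, a k / p ^ k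
              - p * (q - 1) / (q * (p - 1)) * s * ∑ k ∈ Finset.range 40, b k / q ^ k))) := by
  have hp0 : p ≠ 0 := by positivity
  have hq0 : q ≠ 0 := by positivity
  have hp1 : p - 1 ≠ 0 := sub_ne_zero.mpr hp.ne'
  rw [foldl_range_expand_translate hp0, foldl_range_contract_shear hq0,
    sum_div_pow_succ, sum_div_pow_succ]
  refine Prod.ext ?_ ?_
  · rw [hpq, mul_div_cancel_left₀ s (pow_ne_zero 40 hq0)]
  · dsimp only
    field_simp
    ring

/-- Let `p, q > 1` with `p^31 = q^40`. For digit sequences `(a_k)_{k=0}^{30}` and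
`(b_k)_{k=0}^{39}` in `{0,1}`, the composition `T'_{b_39} ∘ ⋯ ∘ T'_{b_0} ∘ T_{a_30} ∘ ⋯ ∘ T_{a_0}`
(where `T_c (s,t) = (p s, p t - (p-1) c)` and `T'_c (s,t) = (s/q, t + ((q-1)/q) c s)`)
maps `(s,t)` to `(s, p^31 t + a_s)` with
`a_s = -(p-1) p^30 (∑_{k≤30} a_k/p^k - (p(q-1)/(q(p-1))) s ∑_{k≤39} b_k/q^k)`;
in particular it is a return map to the vertical line through `s`. -/
theorem return_map_formula (p q : ℝ) (hp : 1 < p) (hq : 1 < q) (hpq : p ^ 31 = q ^ 40)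
    (a b : ℕ → ℝ) (ha : ∀ k, a k = 0 ∨ a k = 1) (hb : ∀ k, b k = 0 ∨ b k = 1)
    (s t : ℝ) (hs : s ≠ 0) :
    (List.range 40).foldl
        (fun (st : ℝ × ℝ) (k : ℕ) => (st.1 / q, st.2 + (q - 1) / q * b k * st.1))
        ((List.range 31).foldl
          (fun (st : ℝ × ℝ) (k : ℕ) => (p * st.1, p * st.2 - (p - 1) * a k)) (s, t))
      = (s, p ^ 31 * t +
          (-(p - 1) * p ^ 30 *
            (∑ k ∈ Finset.range 31, a k / p ^ k
              - p * (q - 1) / (q * (p - 1)) * s * ∑ k ∈ Finset.range 40, b k / q ^ k))) :=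
  return_map_formula_general p q hp hq hpq a b s t
end

section
/- Let γ := 1.0321, p := γ^{40}, q := γ^{31}, δ₁ := (q−1)/((p−1)(q−2) + 2(p−1)(q−1)/q^{39}), δ₂ := (p−2)(q−1)/((p−1) − 2(p−1)(q−1)/q^{39}). Then for all integers i, j with 1 ≤ i ≤ 27 and 1 ≤ j ≤ 37: |p^i/q^j − 1| > max{ (p−2)(q−1)/((p−1)δ₁) + 2(q−1)p^i/q^{39} − 1 , 1 + 2(q−1)p^i/((q−2)q^{39}) − (q−1)/((p−1)(q−2)δ₂) }. -/
/-!
Since `p ^ i / q ^ j = γ ^ (40 i - 31 j)` and `31` does not divide `40 i` for `1 ≤ i ≤ 30`,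
the exponent `e` is a nonzero integer, so `|γ ^ e - 1| ≥ 1 - γ⁻¹ ≈ 0.0311`. The right-hand
side increases with `i` and is still below `0.022` at `i = 24`. For `i = 25, 26, 27` it is
larger (up to `≈ 0.105`), but there `40 i ≡ 8, 17, 26 (mod 31)` keeps `e` further from `0`.
-/

theorem pow_div_pow_eq_zpow_sub {γ : ℝ} (hγ : γ ≠ 0) (a b i j : ℕ) :
    (γ ^ a) ^ i / (γ ^ b) ^ j = γ ^ ((a * i : ℤ) - b * j) := by
  rw [zpow_sub₀ hγ, ← pow_mul, ← pow_mul]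
  norm_cast

theorem min_le_abs_zpow_sub_one {γ : ℝ} (hγ : 1 < γ) {a b : ℕ} {e : ℤ}
    (he : (a : ℤ) ≤ e ∨ e ≤ -b) : min (γ ^ a - 1) (1 - (γ ^ b)⁻¹) ≤ |γ ^ e - 1| := by
  rcases he with hae | heb
  · have hpow : γ ^ a ≤ γ ^ e := by
      simpa using zpow_le_zpow_right₀ hγ.le hae
    have hone : 1 ≤ γ ^ e := one_le_zpow₀ hγ.le (by omega)
    rw [abs_of_nonneg (by linarith)]
    exact (min_le_left _ _).trans (by linarith)
  · have hpow : γ ^ e ≤ (γ ^ b)⁻¹ := by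
      simpa using zpow_le_zpow_right₀ hγ.le heb
    have hone : γ ^ e ≤ 1 := zpow_le_one_of_nonpos₀ hγ.le (by omega)
    rw [abs_of_nonpos (by linarith)]
    exact (min_le_right _ _).trans (by linarith)

/-- Relation (3) of the paper. With `γ = 1.0321`, `p = γ^40`, `q = γ^31`,
`δ₁ = (q-1)/((p-1)(q-2) + 2(p-1)(q-1)/q^39)` and
`δ₂ = (p-2)(q-1)/((p-1) - 2(p-1)(q-1)/q^39)`: for all integers `i, j` with
`1 ≤ i ≤ 27` and `1 ≤ j ≤ 37`,
`|p^i/q^j - 1| > max{(p-2)(q-1)/((p-1)δ₁) + 2(q-1)p^i/q^39 - 1,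
 1 + 2(q-1)p^i/((q-2)q^39) - (q-1)/((p-1)(q-2)δ₂)}`. -/
theorem relation_three :
    let γ : ℝ := 1.0321
    let p : ℝ := γ ^ 40
    let q : ℝ := γ ^ 31
    let δ₁ : ℝ := (q - 1) / ((p - 1) * (q - 2) + 2 * (p - 1) * (q - 1) / q ^ 39)
    let δ₂ : ℝ := (p - 2) * (q - 1) / ((p - 1) - 2 * (p - 1) * (q - 1) / q ^ 39)
    ∀ i j : ℕ, 1 ≤ i → i ≤ 27 → 1 ≤ j → j ≤ 37 →
      max ((p - 2) * (q - 1) / ((p - 1) * δ₁) + 2 * (q - 1) * p ^ i / q ^ 39 - 1)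
          (1 + 2 * (q - 1) * p ^ i / ((q - 2) * q ^ 39)
            - (q - 1) / ((p - 1) * (q - 2) * δ₂))
        < |p ^ i / q ^ j - 1| := by
  intro γ p q δ₁ δ₂ i j hi1 hi27 hj1 hj37
  have hγ : (1 : ℝ) < γ := by norm_num [γ]
  rw [pow_div_pow_eq_zpow_sub (by positivity)]
  rcases (by omega : i ≤ 24 ∨ i = 25 ∨ i = 26 ∨ i = 27) with hi24 | rfl | rfl | rfl
  · have hp : 1 ≤ p := by norm_num [p, γ]
    calc _ ≤ max ((p - 2) * (q - 1) / ((p - 1) * δ₁) + 2 * (q - 1) * p ^ 24 / q ^ 39 - 1)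
          (1 + 2 * (q - 1) * p ^ 24 / ((q - 2) * q ^ 39)
            - (q - 1) / ((p - 1) * (q - 2) * δ₂)) := by
          gcongr
      _ < min (γ ^ 1 - 1) (1 - (γ ^ 1)⁻¹) := by norm_num [γ, p, q, δ₁, δ₂]
      _ ≤ _ := min_le_abs_zpow_sub_one hγ (by omega)
  · exact (by norm_num [γ, p, q, δ₁, δ₂] : _ < min (γ ^ 8 - 1) (1 - (γ ^ 23)⁻¹)).trans_le
      (min_le_abs_zpow_sub_one hγ (by omega))
  · exact (by norm_num [γ, p, q, δ₁, δ₂] : _ < min (γ ^ 17 - 1) (1 - (γ ^ 14)⁻¹)).trans_le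
      (min_le_abs_zpow_sub_one hγ (by omega))
  · exact (by norm_num [γ, p, q, δ₁, δ₂] : _ < min (γ ^ 26 - 1) (1 - (γ ^ 5)⁻¹)).trans_le
      (min_le_abs_zpow_sub_one hγ (by omega))
end
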